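/- arXiv:1602.09009 — 8 statements merged into one kernel-verified Lean document; each statement's English description precedes it below -/
import Mathlib

section
/- Let R = R_{H,X̃} and define X̃' = {x ∈ X : ∀h ∈ H, x R (h•x)}. Then R = R_{H,X̃'}. -/
variable {G X : Type*}

def Invariant [Group G] [MulAction G X] (E : X → X → Prop) : Prop :=
  ∀ (g : G) (x₁ x₂ : X), E x₁ x₂ ↔ E (g • x₁) (g • x₂)

def orbRel [Group G] [MulAction G X] (H : Subgroup G) (x₁ x₂ : X) : Prop :=
  ∃ h ∈ H, h • x₁ = x₂

def RRel [Group G] [MulAction G X] (H : Subgroup G) (Xt : Set X) (x₁ x₂ : X) : Prop :=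
  ∃ g : G, ∃ h ∈ H, g • x₁ = h • (g • x₂) ∧ g • x₁ ∈ Xt

theorem stmt8 [Group G] [MulAction G X] (H : Subgroup G) (Xt : Set X) :
    RRel H Xt = RRel H {x : X | ∀ h ∈ H, RRel H Xt x (h • x)} := by
  ext x₁ x₂
  constructor
  · rintro ⟨g, h, hH, heq, hmem⟩
    refine ⟨g, h, hH, heq, ?_⟩
    intro k hk
    exact ⟨1, k⁻¹, H.inv_mem hk, by simp [smul_smul], by simpa using hmem⟩
  · rintro ⟨g, h, hH, heq, hmem⟩
    obtain ⟨g₀, h₀, h₀H, heq₀, hmem₀⟩ := hmem h⁻¹ (H.inv_mem hH)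
    have key : h⁻¹ • g • x₁ = g • x₂ := by rw [heq]; simp
    rw [key] at heq₀
    exact ⟨g₀ * g, h₀, h₀H, by simpa [mul_smul] using heq₀, by simpa [mul_smul] using hmem₀⟩
end

section
/- Let R = R_{H,X̃} and define H' = {g ∈ G : ∀x̃ ∈ X̃, x̃ R (g•x̃)}. If R is an equivalence relation, then H' is a subgroup of G and R = R_{H',X̃}. -/
variable {G X : Type*}

theorem rrel_smul [Group G] [MulAction G X] (H : Subgroup G) (Xt : Set X) (a : G) {x₁ x₂ : X}
    (h : RRel H Xt x₁ x₂) : RRel H Xt (a • x₁) (a • x₂) := by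
  obtain ⟨g, h', hH, heq, hmem⟩ := h
  refine ⟨g * a⁻¹, h', hH, ?_, ?_⟩
  · simp only [smul_smul, inv_mul_cancel_right]
    simpa [smul_smul] using heq
  · simpa [smul_smul] using hmem

theorem stmt9 [Group G] [MulAction G X] (H : Subgroup G) (Xt : Set X)
    (hEq : Equivalence (RRel H Xt)) :
    ∃ H' : Subgroup G, ((H' : Set G) = {g : G | ∀ xt ∈ Xt, RRel H Xt xt (g • xt)}) ∧
      RRel H Xt = RRel H' Xt := by
  classical
  let S : Subgroup G :=
  { carrier := {g : G | ∀ xt ∈ Xt, RRel H Xt xt (g • xt)}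
    one_mem' := fun xt hx => by simpa using hEq.refl xt
    mul_mem' := by
      intro g₁ g₂ hg₁ hg₂ xt hx
      have h1 : RRel H Xt xt (g₁⁻¹ • xt) := by
        simpa using rrel_smul H Xt g₁⁻¹ (hEq.symm (hg₁ xt hx))
      have h2 := hEq.trans (hEq.symm h1) (hg₂ xt hx)
      have h3 := rrel_smul H Xt g₁ h2
      simpa [smul_smul] using h3
    inv_mem' := by
      intro g hg xt hx
      simpa using rrel_smul H Xt g⁻¹ (hEq.symm (hg xt hx)) }
  refine ⟨S, rfl, ?_⟩
  funext x₁ x₂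
  apply propext
  constructor
  · rintro ⟨g, h, hH, heq, hmem⟩
    refine ⟨g, h, ?_, heq, hmem⟩
    intro xt hx
    exact ⟨1, h⁻¹, H.inv_mem hH, by simp [smul_smul], by simpa using hx⟩
  · rintro ⟨g, s, hs, heq, hmem⟩
    have hinv : s⁻¹ ∈ S := S.inv_mem hs
    have h1 := hinv (g • x₁) hmem
    have h2 : s⁻¹ • (g • x₁) = g • x₂ := by rw [heq]; simp
    rw [h2] at h1
    simpa using rrel_smul H Xt g⁻¹ h1
end

section
/- If E = R_{H,X̃} is a G-invariant equivalence relation and X̃ is a maximal witness (i.e., E ≠ R_{H,X̃'} for any X̃' properly containing X̃), then X̃ is a union of E-classes. -/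
variable {G X : Type*}

theorem stmt10 [Group G] [MulAction G X] (H : Subgroup G) (Xt : Set X)
    (E : X → X → Prop) (hE : E = RRel H Xt)
    (hEq : Equivalence E) (hInv : Invariant (G := G) E)
    (hMax : ∀ Xt' : Set X, Xt ⊂ Xt' → E ≠ RRel H Xt') :
    ∀ x ∈ Xt, ∀ y : X, E x y → y ∈ Xt := by
  -- key lemma: points of Xt are E-related to their H-translates
  have key : ∀ z ∈ Xt, ∀ h ∈ H, E z (h⁻¹ • z) := by
    intro z hz h hh
    rw [hE]
    exact ⟨1, h, hh, by simp, by simpa using hz⟩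
  intro x hx y hxy
  by_contra hy
  apply hMax (insert y Xt) ⟨Set.subset_insert y Xt, fun hsub => hy (hsub (Set.mem_insert y Xt))⟩
  funext x₁ x₂
  apply propext
  constructor
  · intro h
    rw [hE] at h
    obtain ⟨g, h', hh', he, hm⟩ := h
    exact ⟨g, h', hh', he, Set.mem_insert_of_mem y hm⟩
  · rintro ⟨g, h', hh', he, hm⟩
    rcases hm with hm | hm
    · -- g • x₁ = y
      have hx2 : g • x₂ = h'⁻¹ • y := by
        rw [← hm, he, inv_smul_smul]
      -- E y (h'⁻¹ • y)
      have e1 : E x (h'⁻¹ • x) := key x hx h' hh'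
      have e2 : E (h'⁻¹ • x) (h'⁻¹ • y) := (hInv h'⁻¹ x y).mp hxy
      have e3 : E y (h'⁻¹ • y) := hEq.trans (hEq.symm hxy) (hEq.trans e1 e2)
      rw [hInv g, hm, hx2]
      exact e3
    · rw [hE]
      exact ⟨g, h', hh', he, hm⟩
end

section
/- If E = R_{H,X̃} is a G-invariant equivalence relation and H is a normal subgroup of G, then E = E_H, i.e., E is the orbit equivalence relation of H. -/
variable {G X : Type*}

theorem stmt12 [Group G] [MulAction G X] (H : Subgroup G) (hN : H.Normal) (Xt : Set X)
    (E : X → X → Prop) (hE : E = RRel H Xt)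
    (hEq : Equivalence E) (hInv : Invariant (G := G) E) :
    E = orbRel H := by
  funext x y
  ext
  constructor
  · intro hxy
    rw [hE] at hxy
    obtain ⟨g, h, hh, heq, -⟩ := hxy
    refine ⟨(g⁻¹ * h * g)⁻¹, H.inv_mem (hN.conj_mem' h hh g), ?_⟩
    have : (g⁻¹ * h * g) • y = x := by
      have : g⁻¹ • (g • x) = g⁻¹ • (h • g • y) := by rw [heq]
      simpa [mul_smul] using this.symm
    rw [inv_smul_eq_iff]
    exact this.symm
  · rintro ⟨h, hh, rfl⟩
    have hxx : E x x := hEq.refl x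
    rw [hE] at hxx ⊢
    obtain ⟨g, h₀, hh₀, heq, hmem⟩ := hxx
    refine ⟨g, g * h⁻¹ * g⁻¹, ?_, ?_, hmem⟩
    · simpa using hN.conj_mem h⁻¹ (H.inv_mem hh) g
    · simp [mul_smul]
end

section
/- If G is a commutative group acting on X, then every weakly orbital G-invariant equivalence relation on X is orbital. -/
variable {G X : Type*}

theorem stmt13 [CommGroup G] [MulAction G X] (E : X → X → Prop)
    (hEq : Equivalence E) (hInv : Invariant (G := G) E)
    (hwo : ∃ (H : Subgroup G) (Xt : Set X), E = RRel H Xt) :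
    ∃ H : Subgroup G, E = orbRel H := by
  obtain ⟨H, Xt, hE⟩ := hwo
  -- Key: for any h ∈ H and any z, E (h • z) z.
  have key : ∀ h ∈ H, ∀ z : X, E (h • z) z := by
    intro h hH z
    have hr : E (h • z) (h • z) := hEq.refl _
    rw [hE] at hr ⊢
    obtain ⟨g₂, h₂, _, _, hmem⟩ := hr
    exact ⟨g₂, h, hH, by rw [smul_smul, smul_smul, mul_comm], hmem⟩
  refine ⟨H, ?_⟩
  funext x₁ x₂
  apply propext
  constructor
  · intro hx
    rw [hE] at hx
    obtain ⟨g, h, hH, heq, _⟩ := hx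
    have : x₁ = h • x₂ := by
      apply smul_left_cancel g
      rw [heq, smul_smul, smul_smul, mul_comm]
    exact ⟨h⁻¹, H.inv_mem hH, by rw [this, inv_smul_smul]⟩
  · rintro ⟨h, hH, rfl⟩
    exact hEq.symm (key h hH x₁)
end

section
/- A weakly orbital G-invariant equivalence relation E is orbital if and only if E = R_{H,X} for some subgroup H ≤ G (i.e., the whole space X can be chosen as the witnessing set X̃). -/
variable {G X : Type*}

theorem stmt14 [Group G] [MulAction G X] (E : X → X → Prop)
    (hEq : Equivalence E) (hInv : Invariant (G := G) E)
    (hwo : ∃ (H : Subgroup G) (Xt : Set X), E = RRel H Xt) :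
    (∃ H : Subgroup G, E = orbRel H) ↔ (∃ H : Subgroup G, E = RRel H Set.univ) := by
  constructor
  · rintro ⟨H, rfl⟩
    refine ⟨H, funext fun x₁ => funext fun x₂ => propext ?_⟩
    constructor
    · rintro ⟨h, hh, hx⟩
      exact ⟨1, h⁻¹, H.inv_mem hh, by simp [← hx], trivial⟩
    · rintro ⟨g, h, hh, hx, -⟩
      -- orbRel H (g • x₂) (g • x₁) holds via h, so E (g•x₂) (g•x₁)
      have h1 : orbRel H (g • x₂) (g • x₁) := ⟨h, hh, hx.symm⟩
      have h2 : orbRel H x₂ x₁ := (hInv g x₂ x₁).mpr h1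
      exact hEq.symm h2
  · rintro ⟨H, rfl⟩
    set S : Subgroup G :=
      { carrier := {n : G | ∀ x : X, RRel H Set.univ x (n • x)}
        one_mem' := fun x => by simpa using hEq.refl x
        mul_mem' := by
          intro a b ha hb x
          have h1 := hb x
          have h2 := ha (b • x)
          have := hEq.trans h1 h2
          simpa [mul_smul] using this
        inv_mem' := by
          intro a ha x
          have h1 := ha (a⁻¹ • x)
          rw [smul_inv_smul] at h1
          exact hEq.symm h1 } with hS
    refine ⟨S, funext fun x₁ => funext fun x₂ => propext ?_⟩
    constructor
    · rintro ⟨g, h, hh, hx, -⟩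
      refine ⟨g⁻¹ * h⁻¹ * g, fun y => ⟨g, h, hh, ?_, trivial⟩, ?_⟩
      · simp [mul_smul]
      · have : x₂ = (g⁻¹ * h⁻¹ * g) • x₁ := by
          rw [mul_smul, mul_smul, hx]; simp
        exact this.symm
    · rintro ⟨n, hn, hx⟩
      have := hn x₁
      rwa [hx] at this
end

section
/- If G acts transitively on X, then for any G-invariant equivalence relation E and any point x̃ ∈ X, E = R_{H,{x̃}} where H = {g ∈ G : x̃ E (g•x̃)} is the setwise stabiliser of the E-class of x̃. In particular, every invariant equivalence relation under a transitive action is weakly orbital. -/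
variable {G X : Type*}

theorem stmt15 [Group G] [MulAction G X]
    (hTrans : ∀ x y : X, ∃ g : G, g • x = y)
    (E : X → X → Prop) (hEq : Equivalence E) (hInv : Invariant (G := G) E)
    (xt : X) :
    ∃ H : Subgroup G, ((H : Set G) = {g : G | E xt (g • xt)}) ∧ E = RRel H {xt} := by
  refine ⟨{ carrier := {g : G | E xt (g • xt)}
            one_mem' := by simpa using hEq.refl xt
            mul_mem' := by
              intro a b ha hb
              simp only [Set.mem_setOf_eq] at *
              have : E (a • xt) (a • b • xt) := (hInv a xt (b • xt)).mp hb
              simpa [mul_smul] using hEq.trans ha this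
            inv_mem' := by
              intro a ha
              simp only [Set.mem_setOf_eq] at *
              have := (hInv a⁻¹ xt (a • xt)).mp ha
              simp only [inv_smul_smul] at this
              exact hEq.symm this }, rfl, ?_⟩
  funext x₁ x₂
  apply propext
  constructor
  · intro hE
    obtain ⟨g, hg⟩ := hTrans x₁ xt
    obtain ⟨h, hh⟩ := hTrans (g • x₂) xt
    refine ⟨g, h, ?_, ?_, by simpa using hg⟩
    · -- h ∈ H : E xt (h • xt)
      have h1 : E (g • x₁) (g • x₂) := (hInv g x₁ x₂).mp hE
      have h2 : E xt (g • x₂) := hg ▸ h1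
      have h3 : E (h • xt) (h • (g • x₂)) := (hInv h _ _).mp h2
      rw [hh] at h3
      exact hEq.symm h3
    · rw [hg, hh]
  · rintro ⟨g, h, hh, heq, hmem⟩
    simp only [Set.mem_singleton_iff] at hmem
    have hh' : E xt (h • xt) := hh
    have h1 : E (h⁻¹ • xt) (h⁻¹ • h • xt) := (hInv h⁻¹ _ _).mp hh'
    simp only [inv_smul_smul] at h1
    have h2 : g • x₂ = h⁻¹ • xt := by rw [← hmem, heq, inv_smul_smul]
    have h3 : E (g • x₁) (g • x₂) := by
      rw [hmem, h2]; exact hEq.symm h1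
    have := (hInv g⁻¹ _ _).mp h3
    simpa using this
end

section
/- Let G be a compact Hausdorff topological group acting continuously on a Hausdorff space X, and let E be an orbital G-invariant equivalence relation (E = E_H for some subgroup H). Then E is closed in X × X if and only if every E-class is closed in X, and in that case E = E_K for some closed subgroup K ≤ G. -/
variable {G X : Type*}

/-!
Closed graph ⇒ closed classes holds for any relation. Conversely, if every `E_H`-class
`H • x` is closed, it contains `closure H • x`, so `E_H = E_K` for the closed subgroup
`K = closure H`; and `E_K` is closed in `X × X` because it is the projection, along the
compact factor `G`, of the closed set `{(g, x, y) | g ∈ K, g • x = y}`.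
-/

lemma setOf_orbRel_eq_image [Group G] [MulAction G X] (K : Subgroup G) (x : X) :
    {y | orbRel K x y} = (· • x) '' (K : Set G) :=
  rfl

section OrbitRelation

variable [Group G] [TopologicalSpace G] [TopologicalSpace X] [MulAction G X] [ContinuousSMul G X]

lemma isClosed_setOf_orbRel_prod [CompactSpace G] [T2Space X] (K : Subgroup G)
    (hK : IsClosed (K : Set G)) : IsClosed {p : X × X | orbRel K p.1 p.2} := by
  have hclosed : IsClosed {q : G × (X × X) | q.1 ∈ K ∧ q.1 • q.2.1 = q.2.2} :=
    (hK.preimage continuous_fst).inter <|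
      isClosed_eq (continuous_fst.smul (continuous_fst.comp continuous_snd))
        (continuous_snd.comp continuous_snd)
  have hproj : {p : X × X | orbRel K p.1 p.2} =
      Prod.snd '' {q : G × (X × X) | q.1 ∈ K ∧ q.1 • q.2.1 = q.2.2} := by
    ext p
    constructor
    · rintro ⟨g, hg, hgp⟩
      exact ⟨(g, p), ⟨hg, hgp⟩, rfl⟩
    · rintro ⟨⟨g, q⟩, ⟨hg, hgq⟩, rfl⟩
      exact ⟨g, hg, hgq⟩
  rw [hproj]
  exact isClosedMap_snd_of_compactSpace _ hclosed

lemma orbRel_topologicalClosure_eq [IsTopologicalGroup G] (H : Subgroup G)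
    (hcl : ∀ x : X, IsClosed {y | orbRel H x y}) :
    orbRel (X := X) H.topologicalClosure = orbRel H := by
  funext x y
  apply propext
  constructor
  · rintro ⟨k, hk, rfl⟩
    have hk_mem : k • x ∈ closure ((· • x) '' (H : Set G)) :=
      image_closure_subset_closure_image (continuous_id.smul continuous_const) ⟨k, hk, rfl⟩
    rw [← setOf_orbRel_eq_image, (hcl x).closure_eq] at hk_mem
    exact hk_mem
  · rintro ⟨h, hh, rfl⟩
    exact ⟨h, H.le_topologicalClosure hh, rfl⟩

end OrbitRelation

theorem stmt19_general [Group G] [TopologicalSpace G] [IsTopologicalGroup G] [CompactSpace G]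
    [TopologicalSpace X] [T2Space X] [MulAction G X] [ContinuousSMul G X]
    (E : X → X → Prop)
    (H : Subgroup G) (hOrb : E = orbRel H) :
    (IsClosed {p : X × X | E p.1 p.2} ↔ ∀ x : X, IsClosed {y : X | E x y}) ∧
    ((∀ x : X, IsClosed {y : X | E x y}) →
      ∃ K : Subgroup G, IsClosed (K : Set G) ∧ E = orbRel K) := by
  subst hOrb
  have hclosure := orbRel_topologicalClosure_eq (X := X) H
  refine ⟨⟨fun hgraph x => hgraph.preimage (Continuous.prodMk_right x), fun hcl => ?_⟩,
    fun hcl => ⟨_, H.isClosed_topologicalClosure, (hclosure hcl).symm⟩⟩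
  rw [← hclosure hcl]
  exact isClosed_setOf_orbRel_prod _ H.isClosed_topologicalClosure

theorem stmt19 [Group G] [TopologicalSpace G] [IsTopologicalGroup G] [CompactSpace G] [T2Space G]
    [TopologicalSpace X] [T2Space X] [MulAction G X] [ContinuousSMul G X]
    (E : X → X → Prop) (hEq : Equivalence E) (hInv : Invariant (G := G) E)
    (H : Subgroup G) (hOrb : E = orbRel H) :
    (IsClosed {p : X × X | E p.1 p.2} ↔ ∀ x : X, IsClosed {y : X | E x y}) ∧
    ((∀ x : X, IsClosed {y : X | E x y}) →
      ∃ K : Subgroup G, IsClosed (K : Set G) ∧ E = orbRel K) :=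
  stmt19_general E H hOrb
end
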